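/- Let (a_k)_{k∈ℤ} with a_{−k} = a_k be an even stationary solution of the Maxwellian Fourier system. Then for every even integer k ≠ 0, a_k = γ_k (a_{k/2})², and consequently for every m ≥ 1, a_{2^m} = (∏_{j=0}^{m−1} (γ_{2^{m−j}})^{2^j}) · a₁^{2^m}. -/

import Mathlib

/-!
At an even mode `k = 2c` every argument `n - k/2` of `Γ` in the stationary equation is the integer
`n - c`, and `Γ` vanishes at every nonzero integer. So the self-interaction term and the whole
infinite tail drop out, and of the finite convolution only `n = c` survives, with weight
`Γ(0) = 1`: the equation collapses to `a_{2c} = γ_{2c} a_c²`. Iterating this along `k = 2^m`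
squares the previous mode at each step, which produces the product formula.
-/

open Real

/-- Maxwellian kernel transform: `Γ(u) = sin(πu)/(πu)` for `u ≠ 0`, `Γ(0) = 1`. -/
noncomputable def Gam (u : ℝ) : ℝ :=
  if u = 0 then 1 else Real.sin (π * u) / (π * u)

open Finset

lemma Gam_intCast_of_ne_zero {n : ℤ} (hn : n ≠ 0) : Gam n = 0 := by
  rw [Gam, if_neg (Int.cast_ne_zero.mpr hn), mul_comm, Real.sin_int_mul_pi, zero_div]

lemma Gam_zero : Gam 0 = 1 := if_pos rfl

lemma Gam_intCast_sub_half_two_mul (n c : ℤ) :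
    Gam ((n : ℝ) - ((2 * c : ℤ) : ℝ) / 2) = if n = c then 1 else 0 := by
  have hcast : (n : ℝ) - ((2 * c : ℤ) : ℝ) / 2 = ((n - c : ℤ) : ℝ) := by push_cast; ring
  split_ifs with h
  · rw [hcast, h, sub_self, Int.cast_zero, Gam_zero]
  · rw [hcast, Gam_intCast_of_ne_zero (sub_ne_zero.mpr h)]

def MaxwellianStationaryAt (γ a : ℤ → ℝ) (k : ℤ) : Prop :=
  a k = 2 * γ k * Gam ((k : ℝ) / 2) * a k
    + γ k * (∑ n ∈ Ico (1 : ℤ) k, Gam ((n : ℝ) - (k : ℝ) / 2) * a n * a (k - n))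
    + 2 * γ k * (∑' m : ℕ, Gam (((k : ℝ) + 1 + (m : ℝ)) - (k : ℝ) / 2)
        * a (k + 1 + (m : ℤ)) * a ((m : ℤ) + 1))

namespace MaxwellianStationaryAt

variable {c : ℤ}

lemma convolution_two_mul_eq_sq (a : ℤ → ℝ) (hc : 1 ≤ c) :
    ∑ n ∈ Ico (1 : ℤ) (2 * c), Gam ((n : ℝ) - ((2 * c : ℤ) : ℝ) / 2) * a n * a (2 * c - n)
      = a c ^ 2 := by
  simp_rw [Gam_intCast_sub_half_two_mul, ite_mul, one_mul, zero_mul]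
  rw [sum_ite_eq' _ c, if_pos (mem_Ico.mpr ⟨hc, by omega⟩), two_mul, add_sub_cancel_right, sq]

lemma tail_two_mul_eq_zero (a : ℤ → ℝ) (hc : 1 ≤ c) :
    ∑' m : ℕ, Gam ((((2 * c : ℤ) : ℝ) + 1 + (m : ℝ)) - ((2 * c : ℤ) : ℝ) / 2)
      * a (2 * c + 1 + (m : ℤ)) * a ((m : ℤ) + 1) = 0 := by
  refine (tsum_congr fun m ↦ ?_).trans tsum_zero
  have hcast : (((2 * c : ℤ) : ℝ) + 1 + (m : ℝ)) - ((2 * c : ℤ) : ℝ) / 2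
      = ((c + 1 + (m : ℤ) : ℤ) : ℝ) := by push_cast; ring
  rw [hcast, Gam_intCast_of_ne_zero (by omega), zero_mul, zero_mul]

lemma eq_mul_sq_of_two_mul {γ a : ℤ → ℝ} (h : MaxwellianStationaryAt γ a (2 * c)) (hc : 1 ≤ c) :
    a (2 * c) = γ (2 * c) * a c ^ 2 := by
  have hhalf : Gam (((2 * c : ℤ) : ℝ) / 2) = 0 := by
    rw [show ((2 * c : ℤ) : ℝ) / 2 = (c : ℝ) by push_cast; ring]
    exact Gam_intCast_of_ne_zero (by omega)
  rw [MaxwellianStationaryAt, hhalf, convolution_two_mul_eq_sq a hc, tail_two_mul_eq_zero a hc] at h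
  linarith

end MaxwellianStationaryAt

lemma eq_prod_pow_mul_pow_of_succ_eq_mul_sq {M : Type*} [CommMonoid M] {b c : ℕ → M}
    (h : ∀ m, b (m + 1) = c (m + 1) * b m ^ 2) (m : ℕ) :
    b m = (∏ j ∈ range m, c (m - j) ^ 2 ^ j) * b 0 ^ 2 ^ m := by
  induction m with
  | zero => simp
  | succ m ih =>
    rw [h, ih, prod_range_succ', Nat.sub_zero, pow_zero, pow_one, mul_pow, ← prod_pow]
    simp_rw [Nat.add_sub_add_right, ← pow_mul, ← pow_succ]
    ac_rfl

theorem stmt_16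
    (γ : ℤ → ℝ) (hγeven : ∀ k, γ (-k) = γ k)
    (a : ℤ → ℝ) (haeven : ∀ k, a (-k) = a k)
    (hstat : ∀ k : ℤ, 1 ≤ k →
      a k = 2 * γ k * Gam ((k : ℝ) / 2) * a k
        + γ k * (∑ n ∈ Finset.Ico (1 : ℤ) k,
            Gam ((n : ℝ) - (k : ℝ) / 2) * a n * a (k - n))
        + 2 * γ k * (∑' m : ℕ, Gam (((k : ℝ) + 1 + (m : ℝ)) - (k : ℝ) / 2)
            * a (k + 1 + (m : ℤ)) * a ((m : ℤ) + 1))) :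
    (∀ k : ℤ, k ≠ 0 → Even k → a k = γ k * (a (k / 2)) ^ 2) ∧
    (∀ m : ℕ, 1 ≤ m →
      a (2 ^ m) = (∏ j ∈ Finset.range m, (γ ((2 : ℤ) ^ (m - j))) ^ (2 ^ j)) * (a 1) ^ (2 ^ m)) := by
  have hpos : ∀ c : ℤ, 1 ≤ c → a (2 * c) = γ (2 * c) * a c ^ 2 := fun c hc ↦
    MaxwellianStationaryAt.eq_mul_sq_of_two_mul (hstat (2 * c) (by omega)) hc
  refine ⟨fun k hk ⟨c, hkc⟩ ↦ ?_, fun m _ ↦ ?_⟩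
  · rw [hkc, ← two_mul, Int.mul_ediv_cancel_left c two_ne_zero]
    rcases le_or_gt 0 c with hc | hc
    · exact hpos c (by omega)
    · simpa only [mul_neg, haeven, hγeven] using hpos (-c) (by omega)
  · have hsq : ∀ j : ℕ, a (2 ^ (j + 1)) = γ (2 ^ (j + 1)) * a (2 ^ j) ^ 2 := fun j ↦ by
      simpa [pow_succ'] using hpos (2 ^ j) (one_le_pow₀ one_le_two)
    simpa using eq_prod_pow_mul_pow_of_succ_eq_mul_sq (b := fun j ↦ a (2 ^ j))
      (c := fun j ↦ γ (2 ^ j)) hsq m
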